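/- arXiv:1902.09298 — 2 statements merged into one kernel-verified Lean document; each statement's English description precedes it below -/
import Mathlib

section
/- Let V be a (2s+1)-dimensional inner product space with an almost contact structure (φ, ξ, g): φξ = 0, g(ξ,ξ) = 1, φ² = -id + g(·,ξ)ξ, g(φX, φY) = g(X,Y) - g(X,ξ)g(Y,ξ). Let R̄ be the curvature-type tensor of a Kenmotsu statistical manifold of constant φ-sectional curvature c̄ (given by the standard formula with coefficients (c̄-3)/4 and (c̄+1)/4). Then the Ricci tensor R̄ic(X,Y) = Σᵢ g(R̄(eᵢ, X)Y, eᵢ) satisfies R̄ic(X,Y) = t₁ g(X,Y) + t₂ g(X,ξ)g(Y,ξ), where t₁ = (c̄(s+1) - 3s + 1)/2 and t₂ = -(c̄+1)(s+1)/2. Moreover R̄ic is never identically zero (for s ≥ 1). -/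
open scoped RealInnerProductSpace BigOperators

/-- Let `V` be a `(2s+1)`-dimensional inner product space with an almost
contact structure `(φ, ξ, g)` and let `R` be the curvature-type tensor of a Kenmotsu
statistical manifold of constant φ-sectional curvature `c`.  Then the Ricci tensor
`Ric(X,Y) = Σᵢ ⟪R(eᵢ,X)Y, eᵢ⟫` satisfies
`Ric(X,Y) = t₁ ⟪X,Y⟫ + t₂ ⟪X,ξ⟫⟪Y,ξ⟫` with `t₁ = (c(s+1) - 3s + 1)/2` and
`t₂ = -(c+1)(s+1)/2`; moreover `Ric` is never identically zero (for `s ≥ 1`). -/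
theorem statement10 {V : Type*} [NormedAddCommGroup V] [InnerProductSpace ℝ V]
    (s : ℕ) (b : OrthonormalBasis (Fin (2 * s + 1)) ℝ V)
    (φ : V →ₗ[ℝ] V) (ξ : V)
    (hφξ : φ ξ = 0) (hξ : ⟪ξ, ξ⟫ = 1)
    (hφ2 : ∀ X, φ (φ X) = -X + ⟪X, ξ⟫ • ξ)
    (hcompat : ∀ X Y, ⟪φ X, φ Y⟫ = ⟪X, Y⟫ - ⟪X, ξ⟫ * ⟪Y, ξ⟫)
    (hskew : ∀ X Y, ⟪φ X, Y⟫ = -⟪X, φ Y⟫)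
    (c : ℝ)
    (R : V → V → V → V)
    (hR : ∀ X Y Z, R X Y Z =
      ((c - 3) / 4) • (⟪Y, Z⟫ • X - ⟪X, Z⟫ • Y)
      + ((c + 1) / 4) • (⟪φ Y, Z⟫ • φ X - ⟪φ X, Z⟫ • φ Y - (2 * ⟪φ X, Y⟫) • φ Z
          - (⟪Y, ξ⟫ * ⟪Z, ξ⟫) • X + (⟪X, ξ⟫ * ⟪Z, ξ⟫) • Y
          + (⟪Y, ξ⟫ * ⟪X, Z⟫) • ξ - (⟪X, ξ⟫ * ⟪Y, Z⟫) • ξ))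
    (Ric : V → V → ℝ)
    (hRic : ∀ X Y, Ric X Y = ∑ i, ⟪R (b i) X Y, b i⟫) :
    (∀ X Y, Ric X Y = ((c * (s + 1) - 3 * s + 1) / 2) * ⟪X, Y⟫
        + (-(c + 1) * (s + 1) / 2) * (⟪X, ξ⟫ * ⟪Y, ξ⟫)) ∧
    (1 ≤ s → ¬ (∀ X Y, Ric X Y = 0)) := by
  have hnorm : ∀ i, ⟪b i, b i⟫ = (1:ℝ) := fun i => by
    simp [orthonormal_iff_ite.mp b.orthonormal]
  have hsum : ∀ x y : V, ∑ i, ⟪x, b i⟫ * ⟪y, b i⟫ = ⟪x, y⟫ := fun x y => by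
    simpa [real_inner_comm] using b.sum_inner_mul_inner x y
  have hterm : ∀ X Y e : V, ⟪R e X Y, e⟫ =
      ((c-3)/4) * ⟪X,Y⟫ * ⟪e,e⟫ - ((c-3)/4) * ⟪X,e⟫ * ⟪Y,e⟫
      + 3*((c+1)/4) * (⟪φ X,e⟫ * ⟪φ Y,e⟫)
      - ((c+1)/4) * ⟪X,ξ⟫ * ⟪Y,ξ⟫ * ⟪e,e⟫
      + ((c+1)/4) * ⟪Y,ξ⟫ * (⟪X,e⟫ * ⟪ξ,e⟫)
      + ((c+1)/4) * ⟪X,ξ⟫ * (⟪Y,e⟫ * ⟪ξ,e⟫)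
      - ((c+1)/4) * ⟪X,Y⟫ * (⟪ξ,e⟫ * ⟪ξ,e⟫) := by
    intro X Y e
    have hA : ⟪φ e, e⟫ = (0:ℝ) := by
      have h1 := hskew e e
      have h2 := real_inner_comm (φ e) e
      linarith
    have hB : ⟪φ e, Y⟫ = -⟪φ Y, e⟫ := by rw [hskew, real_inner_comm]
    have hC : ⟪φ e, X⟫ = -⟪φ X, e⟫ := by rw [hskew, real_inner_comm]
    rw [hR]
    simp only [inner_add_left, inner_sub_left, real_inner_smul_left]
    rw [hA, hB, hC, real_inner_comm ξ e, real_inner_comm e Y, real_inner_comm e X]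
    ring
  have main : ∀ X Y, Ric X Y = ((c * (s + 1) - 3 * s + 1) / 2) * ⟪X, Y⟫
      + (-(c + 1) * (s + 1) / 2) * (⟪X, ξ⟫ * ⟪Y, ξ⟫) := by
    intro X Y
    rw [hRic]
    calc ∑ i, ⟪R (b i) X Y, b i⟫
        = ∑ i, (((c:ℝ)-3)/4 * ⟪X,Y⟫ * ⟪b i,b i⟫ - ((c-3)/4) * ⟪X,b i⟫ * ⟪Y,b i⟫
          + 3*((c+1)/4) * (⟪φ X,b i⟫ * ⟪φ Y,b i⟫)
          - ((c+1)/4) * ⟪X,ξ⟫ * ⟪Y,ξ⟫ * ⟪b i,b i⟫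
          + ((c+1)/4) * ⟪Y,ξ⟫ * (⟪X,b i⟫ * ⟪ξ,b i⟫)
          + ((c+1)/4) * ⟪X,ξ⟫ * (⟪Y,b i⟫ * ⟪ξ,b i⟫)
          - ((c+1)/4) * ⟪X,Y⟫ * (⟪ξ,b i⟫ * ⟪ξ,b i⟫)) :=
          Finset.sum_congr rfl fun i _ => hterm X Y (b i)
      _ = ((c * (s + 1) - 3 * s + 1) / 2) * ⟪X, Y⟫
          + (-(c + 1) * (s + 1) / 2) * (⟪X, ξ⟫ * ⟪Y, ξ⟫) := by
          simp only [hnorm, mul_one, mul_assoc, Finset.sum_add_distrib,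
            Finset.sum_sub_distrib, ← Finset.mul_sum, hsum, Finset.sum_const,
            Finset.card_fin, nsmul_eq_mul]
          rw [hcompat, hξ]
          push_cast
          ring
  refine ⟨main, fun hs hzero => ?_⟩
  have h1 := main ξ ξ
  rw [hzero, hξ] at h1
  have h2 : (1:ℝ) ≤ (s:ℝ) := by exact_mod_cast hs
  nlinarith [h1]
end

section
/- Suppose a statistical submanifold (N, ∇, g) of a Kenmotsu statistical manifold of constant φ-sectional curvature c̄ = -1 (with ξ tangent to N and φ(TN) ⊂ TN) is totally umbilical in the dual sense: h(X,Y) = g(X,Y)H and h*(X,Y) = g(X,Y)H*. Then the curvature tensor of N satisfies R(X,Y)Z = (g(H,H*) - 1)[g(Y,Z)X - g(X,Z)Y]; in particular, if g(H,H*) is constant, N is a statistical manifold of constant curvature g(H,H*) - 1. -/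
/-- Let `(N, ∇, g)` be a statistical submanifold of a Kenmotsu statistical
manifold of constant φ-sectional curvature `c̄ = -1` (with `ξ` tangent to `N` and
`φ(TN) ⊂ TN`) which is totally umbilical in the dual sense:
`h(X,Y) = g(X,Y)H` and `h*(X,Y) = g(X,Y)H*`.  Then the curvature tensor of `N` satisfies
`R(X,Y)Z = (ḡ(H,H*) - 1)[g(Y,Z)X - g(X,Z)Y]`; in particular, if `ḡ(H,H*)` is constant,
`N` is a statistical manifold of constant curvature `ḡ(H,H*) - 1`.
Here `TV` is the tangent module, `NV` the normal module, `A, A*` the shape operators,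
and `R` is given by the statistical Gauss equation with `c̄ = -1` (so `(c̄-3)/4 = -1`
and the `(c̄+1)/4` φ-terms vanish). -/
theorem statement16 {TV NV : Type*} [AddCommGroup TV] [Module ℝ TV]
    [AddCommGroup NV] [Module ℝ NV]
    (g : TV → TV → ℝ) (gb : NV → NV → ℝ)
    (hg_symm : ∀ X Y, g X Y = g Y X)
    (hg_addl : ∀ X Y Z, g (X + Y) Z = g X Z + g Y Z)
    (hg_smul : ∀ (r : ℝ) X Y, g (r • X) Y = r * g X Y)
    (hg_nd : ∀ X, (∀ Y, g X Y = 0) → X = 0)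
    (hgb_symm : ∀ U W, gb U W = gb W U)
    (h hstar : TV → TV → NV) (A Astar : NV → TV → TV)
    -- shape operator identities
    (hA : ∀ U X W, g (A U X) W = gb (hstar X W) U)
    (hAstar : ∀ U X W, g (Astar U X) W = gb (h X W) U)
    (hA_smul : ∀ (r : ℝ) U X, A (r • U) X = r • A U X)
    (hAstar_smul : ∀ (r : ℝ) U X, Astar (r • U) X = r • Astar U X)
    (H Hstar : NV)
    -- total umbilicity in the dual sense
    (humb : ∀ X Y, h X Y = g X Y • H)
    (humbs : ∀ X Y, hstar X Y = g X Y • Hstar)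
    (R : TV → TV → TV → TV)
    -- the statistical Gauss equation with c̄ = -1
    (hGauss : ∀ X Y Z, R X Y Z =
      (((-1 : ℝ) - 3) / 4) • (g Y Z • X - g X Z • Y)
      + ((1 : ℝ) / 2) • (A (h Y Z) X + Astar (hstar Y Z) X)
      - ((1 : ℝ) / 2) • (A (h X Z) Y + Astar (hstar X Z) Y)) :
    ∀ X Y Z, R X Y Z = (gb H Hstar - 1) • (g Y Z • X - g X Z • Y) := by
  have hg_smur : ∀ (r : ℝ) X Y, g X (r • Y) = r * g X Y := fun r X Y => by
    rw [hg_symm, hg_smul, hg_symm]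
  -- key pointwise evaluations of the shape operators on the mean curvature vectors
  have keyA : ∀ X W, g (A H X) W = g X W * gb Hstar H := by
    intro X W
    by_cases hz : ∀ X Y, g X Y = 0
    · rw [hz X W, zero_mul, hz]
    · push_neg at hz
      obtain ⟨X₀, Y₀, hd⟩ := hz
      set d := g X₀ Y₀ with hdd
      have e1 : hstar X W = hstar X₀ ((g X W / d) • Y₀) := by
        rw [humbs, humbs, hg_smur, div_mul_cancel₀ _ hd]
      have e2 : hstar X₀ ((1 / d) • Y₀) = Hstar := by
        rw [humbs, hg_smur, one_div, inv_mul_cancel₀ hd, one_smul]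
      have e3 : g (A H X₀) Y₀ = d * gb Hstar H := by
        rw [← e2, ← hA, hg_smur, ← mul_assoc, mul_one_div, div_self hd, one_mul]
      rw [hA, e1, ← hA, hg_smur, e3, ← mul_assoc, div_mul_cancel₀ _ hd]
  have keyAs : ∀ X W, g (Astar Hstar X) W = g X W * gb H Hstar := by
    intro X W
    by_cases hz : ∀ X Y, g X Y = 0
    · rw [hz X W, zero_mul, hz]
    · push_neg at hz
      obtain ⟨X₀, Y₀, hd⟩ := hz
      set d := g X₀ Y₀ with hdd
      have e1 : h X W = h X₀ ((g X W / d) • Y₀) := by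
        rw [humb, humb, hg_smur, div_mul_cancel₀ _ hd]
      have e2 : h X₀ ((1 / d) • Y₀) = H := by
        rw [humb, hg_smur, one_div, inv_mul_cancel₀ hd, one_smul]
      have e3 : g (Astar Hstar X₀) Y₀ = d * gb H Hstar := by
        rw [← e2, ← hAstar, hg_smur, ← mul_assoc, mul_one_div, div_self hd, one_mul]
      rw [hAstar, e1, ← hAstar, hg_smur, e3, ← mul_assoc, div_mul_cancel₀ _ hd]
  -- hence the shape operators at H, Hstar are scalar
  have AH : ∀ X, A H X = gb H Hstar • X := by
    intro X
    have : ∀ W, g (A H X - gb H Hstar • X) W = 0 := by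
      intro W
      rw [sub_eq_add_neg, ← neg_smul, hg_addl, hg_smul, keyA, hgb_symm]
      ring
    exact sub_eq_zero.mp (hg_nd _ this)
  have AsH : ∀ X, Astar Hstar X = gb H Hstar • X := by
    intro X
    have : ∀ W, g (Astar Hstar X - gb H Hstar • X) W = 0 := by
      intro W
      rw [sub_eq_add_neg, ← neg_smul, hg_addl, hg_smul, keyAs]
      ring
    exact sub_eq_zero.mp (hg_nd _ this)
  intro X Y Z
  rw [hGauss, humb, humbs, humb, humbs, hA_smul, hAstar_smul, hA_smul, hAstar_smul,
    AH, AsH, AH, AsH]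
  set c := gb H Hstar
  match_scalars <;> ring
end
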